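/- arXiv:2303.03867 — 3 statements merged into one kernel-verified Lean document; each statement's English description precedes it below -/
import Mathlib

section
/- Let K be a category, F : K ⥤ K an endofunctor admitting a right adjoint R, O an object of K, and J a (small) connected category. If K has all limits of shape J, then the category F-Mre of F-Moore machines with output O has all limits of shape J, and the forgetful functor F-Mre → K sending (E,d,s) to E creates limits of shape J (so connected limits, in particular equalizers, are computed as in K on carriers). -/
open CategoryTheory Limits

universe w w' v u

/-- An `F`-Moore machine with output `O`: a carrier `E` with maps `d : F E ⟶ E`
and `s : E ⟶ O`. -/
structure FMoore {K : Type u} [Category.{v} K] (F : K ⥤ K) (O : K) : Type max u v where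
  E : K
  d : F.obj E ⟶ E
  s : E ⟶ O

namespace FMoore

variable {K : Type u} [Category.{v} K] {F : K ⥤ K} {O : K}

/-- A morphism of `F`-Moore machines. -/
@[ext]
structure Hom (M N : FMoore F O) : Type v where
  f : M.E ⟶ N.E
  hd : M.d ≫ f = F.map f ≫ N.d
  hs : M.s = f ≫ N.s

instance : Category (FMoore F O) where
  Hom := Hom
  id M := ⟨𝟙 M.E, by simp, by simp⟩
  comp u v := ⟨u.f ≫ v.f, by
      rw [F.map_comp, Category.assoc, ← v.hd, ← Category.assoc, u.hd, Category.assoc], by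
      rw [Category.assoc, ← v.hs, u.hs]⟩
  id_comp u := Hom.ext (Category.id_comp u.f)
  comp_id u := Hom.ext (Category.comp_id u.f)
  assoc u v w := Hom.ext (Category.assoc u.f v.f w.f)

/-- The forgetful functor sending a machine `(E, d, s)` to its carrier `E`. -/
def forget (F : K ⥤ K) (O : K) : FMoore F O ⥤ K where
  obj M := M.E
  map u := u.f

end FMoore

/-!
The forgetful functor reflects isomorphisms, so it suffices to lift a limit cone `c` of the
carriers. Its apex gets the dynamics induced by the cone `F c.pt ⟶ F (G j).E ⟶ (G j).E`
(this is how limits of algebras for an endofunctor are built) and the output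
`c.π j ≫ (G j).s`, which does not depend on `j` because `J` is connected.
-/

namespace FMoore

variable {K : Type u} [Category.{v} K] {F : K ⥤ K} {O : K}

lemma hom_ext {M N : FMoore F O} {u v : M ⟶ N} (h : u.f = v.f) : u = v := Hom.ext h

noncomputable def Hom.inv {M N : FMoore F O} (u : M ⟶ N) [IsIso u.f] : N ⟶ M where
  f := CategoryTheory.inv u.f
  hd := by
    rw [← cancel_epi (F.map u.f), ← Category.assoc, ← u.hd]
    simp
  hs := by simp [u.hs]

instance : (forget F O).ReflectsIsomorphisms where
  reflects u (_ : IsIso u.f) :=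
    ⟨⟨Hom.inv u, hom_ext (IsIso.hom_inv_id u.f), hom_ext (IsIso.inv_hom_id u.f)⟩⟩

section Limits

variable {J : Type w} [Category.{w'} J] (G : J ⥤ FMoore F O) (c : Cone (G ⋙ forget F O))

lemma cone_π_comp_f {j j' : J} (u : j ⟶ j') : c.π.app j ≫ (G.map u).f = c.π.app j' :=
  c.w u

lemma cone_π_comp_s_eq [IsConnected J] (j j' : J) :
    c.π.app j ≫ (G.obj j).s = c.π.app j' ≫ (G.obj j').s :=
  constant_of_preserves_morphisms (fun j => c.π.app j ≫ (G.obj j).s) (fun j j' u => calc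
      c.π.app j ≫ (G.obj j).s = c.π.app j ≫ (G.map u).f ≫ (G.obj j').s :=
        whisker_eq _ (G.map u).hs
      _ = c.π.app j' ≫ (G.obj j').s :=
        (Category.assoc _ _ _).symm.trans (eq_whisker (cone_π_comp_f G c u) _)) j j'

def dynamicsCone : Cone (G ⋙ forget F O) where
  pt := F.obj c.pt
  π :=
    { app j := F.map (c.π.app j) ≫ (G.obj j).d
      naturality j j' u := calc
        _ = F.map (c.π.app j ≫ (G.map u).f) ≫ (G.obj j').d := by
          rw [cone_π_comp_f]; exact Category.id_comp _
        _ = F.map (c.π.app j) ≫ F.map (G.map u).f ≫ (G.obj j').d := F.map_comp_assoc _ _ _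
        _ = F.map (c.π.app j) ≫ (G.obj j).d ≫ (G.map u).f := whisker_eq _ (G.map u).hd.symm
        _ = _ := (Category.assoc _ _ _).symm }

noncomputable def liftCone [IsConnected J] (t : IsLimit c) : Cone G where
  pt :=
    { E := c.pt
      d := t.lift (dynamicsCone G c)
      s := c.π.app (Classical.arbitrary J) ≫ (G.obj (Classical.arbitrary J)).s }
  π :=
    { app j :=
        { f := c.π.app j
          hd := t.fac _ j
          hs := cone_π_comp_s_eq G c _ j }
      naturality _ _ u := hom_ext ((Category.id_comp _).trans (cone_π_comp_f G c u).symm) }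

lemma lift_mapCone_comp_π (t : IsLimit c) (m : Cone G) (j : J) :
    t.lift ((forget F O).mapCone m) ≫ c.π.app j = (m.π.app j).f :=
  t.fac _ j

lemma liftCone_d_comp_π [IsConnected J] (t : IsLimit c) (j : J) :
    (liftCone G c t).pt.d ≫ c.π.app j = F.map (c.π.app j) ≫ (G.obj j).d :=
  t.fac _ j

lemma liftCone_s_eq [IsConnected J] (t : IsLimit c) (j : J) :
    (liftCone G c t).pt.s = c.π.app j ≫ (G.obj j).s :=
  cone_π_comp_s_eq G c _ j

noncomputable def isLimitLiftCone [IsConnected J] (t : IsLimit c) : IsLimit (liftCone G c t) where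
  lift m :=
    { f := t.lift ((forget F O).mapCone m)
      hd := t.hom_ext fun j => by
        erw [Category.assoc, Category.assoc, lift_mapCone_comp_π, liftCone_d_comp_π,
          ← F.map_comp_assoc, lift_mapCone_comp_π]
        exact (m.π.app j).hd
      hs := by
        rw [liftCone_s_eq G c t (Classical.arbitrary J)]
        erw [← Category.assoc, lift_mapCone_comp_π]
        exact (m.π.app _).hs }
  fac m j := hom_ext (lift_mapCone_comp_π G c t m j)
  uniq m u hu := hom_ext (t.uniq ((forget F O).mapCone m) u.f fun j => congrArg Hom.f (hu j))

end Limits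

noncomputable instance createsLimitsOfShapeForget {J : Type w} [Category.{w'} J] [IsConnected J] :
    CreatesLimitsOfShape J (forget F O) where
  CreatesLimit {G} := createsLimitOfReflectsIso fun c t =>
    { liftedCone := liftCone G c t
      validLift := Cone.ext (Iso.refl _) fun _ => (Category.id_comp _).symm
      makesLimit := isLimitLiftCone G c t }

end FMoore

theorem fMoore_hasConnectedLimitsOfShape_and_forget_createsLimits_general
    {K : Type u} [Category.{v} K] (F : K ⥤ K) (O : K)
    (J : Type w) [Category.{w'} J] [IsConnected J] [HasLimitsOfShape J K] :
    HasLimitsOfShape J (FMoore F O) ∧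
      Nonempty (CreatesLimitsOfShape J (FMoore.forget F O)) :=
  ⟨hasLimitsOfShape_of_hasLimitsOfShape_createsLimitsOfShape (FMoore.forget F O),
    ⟨inferInstance⟩⟩

/-- If `F : K ⥤ K` has a right adjoint `R`, `J` is a connected category, and `K` has
limits of shape `J`, then the category of `F`-Moore machines with output `O` has limits
of shape `J`, and the forgetful functor to `K` creates them. -/
theorem fMoore_hasConnectedLimitsOfShape_and_forget_createsLimits
    {K : Type u} [Category.{v} K] (F : K ⥤ K) (R : K ⥤ K) (adj : F ⊣ R) (O : K)
    (J : Type w) [Category.{w'} J] [IsConnected J] [HasLimitsOfShape J K] :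
    HasLimitsOfShape J (FMoore F O) ∧
      Nonempty (CreatesLimitsOfShape J (FMoore.forget F O)) :=
  fMoore_hasConnectedLimitsOfShape_and_forget_createsLimits_general F O J
end

section
/- Let K be a category with countable products and pullbacks, F : K ⥤ K an endofunctor with a right adjoint R, and O an object of K. Then the category F-Mly of F-Mealy machines with output O has binary products; moreover, the product of two machines (E, d_E, s_E) and (T, d_T, s_T) has as carrier the pullback P_∞ in K of the canonical comparison morphisms s̄_{E,∞} : E ⟶ O_∞ and s̄_{T,∞} : T ⟶ O_∞ into the terminal F-Mealy machine with carrier O_∞ = ∏_{n ≥ 1} Rⁿ(O). -/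
open CategoryTheory Limits

universe w w' v u

/-- An `F`-Mealy machine with output `O`: a carrier `E` with maps `d : F E ⟶ E`
and `s : F E ⟶ O`. -/
structure FMealy {K : Type u} [Category.{v} K] (F : K ⥤ K) (O : K) : Type max u v where
  E : K
  d : F.obj E ⟶ E
  s : F.obj E ⟶ O

namespace FMealy

variable {K : Type u} [Category.{v} K] {F : K ⥤ K} {O : K}

/-- A morphism of `F`-Mealy machines. -/
@[ext]
structure Hom (M N : FMealy F O) : Type v where
  f : M.E ⟶ N.E
  hd : M.d ≫ f = F.map f ≫ N.d
  hs : M.s = F.map f ≫ N.s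

instance : Category (FMealy F O) where
  Hom := Hom
  id M := ⟨𝟙 M.E, by simp, by simp⟩
  comp u v := ⟨u.f ≫ v.f, by
      rw [F.map_comp, Category.assoc, ← v.hd, ← Category.assoc, u.hd, Category.assoc], by
      rw [F.map_comp, Category.assoc, ← v.hs, u.hs]⟩
  id_comp u := Hom.ext (Category.id_comp u.f)
  comp_id u := Hom.ext (Category.comp_id u.f)
  assoc u v w := Hom.ext (Category.assoc u.f v.f w.f)

/-- The forgetful functor sending a machine `(E, d, s)` to its carrier `E`. -/
def forget (F : K ⥤ K) (O : K) : FMealy F O ⥤ K where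
  obj M := M.E
  map u := u.f

end FMealy

/-- The `n`-fold application of a functor `R` to an object `O`. -/
def iterObj {K : Type u} [Category.{v} K] (R : K ⥤ K) (O : K) : ℕ → K
  | 0 => O
  | n + 1 => R.obj (iterObj R O n)

/-
The equations of a machine morphism into `O_∞` determine its components recursively: the output
equation fixes component `0` as `s̄₁`, and since the dynamics of `O_∞` shifts components by one, the
dynamics equation turns component `n` into component `n + 1` by one transposition. Binary products
are pullbacks over the terminal object, and pullbacks of machines are computed on carriers: the
dynamics of the pullback is induced by those of the two factors, and its two candidate outputs agree
because both factor through the output of the base.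
-/

namespace FMealy

variable {K : Type u} [Category.{v} K] {F : K ⥤ K}

@[ext]
lemma hom_ext {O : K} {M N : FMealy F O} {u v : M ⟶ N} (h : u.f = v.f) : u = v := Hom.ext h

section Terminal

variable [HasProductsOfShape ℕ K] {R : K ⥤ K} (adj : F ⊣ R) (O : K)

-- The `n`-th component of `O_∞` is `R^{n+1} O`, so projection `n + 1` lands in `R (R^{n+1} O)`.
noncomputable def terminalD :
    F.obj (∏ᶜ fun n : ℕ => iterObj R O (n + 1)) ⟶ ∏ᶜ fun n : ℕ => iterObj R O (n + 1) :=
  Pi.lift fun n => (adj.homEquiv _ _).symm (Pi.π _ (n + 1))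

noncomputable def terminalS : F.obj (∏ᶜ fun n : ℕ => iterObj R O (n + 1)) ⟶ O :=
  (adj.homEquiv _ O).symm (Pi.π _ 0)

noncomputable def terminalMachine : FMealy F O :=
  ⟨∏ᶜ fun n : ℕ => iterObj R O (n + 1), terminalD adj O, terminalS adj O⟩

variable {O}

-- `skipTranspose adj M n` is the paper's `s̄_{n+1} : E ⟶ R^{n+1} O`.
noncomputable def skipTranspose (M : FMealy F O) : ∀ n : ℕ, M.E ⟶ iterObj R O (n + 1)
  | 0 => adj.homEquiv _ O M.s
  | n + 1 => adj.homEquiv _ _ (M.d ≫ skipTranspose M n)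

lemma map_comp_terminalS {X : K} (g : X ⟶ ∏ᶜ fun n : ℕ => iterObj R O (n + 1)) :
    F.map g ≫ terminalS adj O = (adj.homEquiv X O).symm (g ≫ Pi.π _ 0) :=
  (adj.homEquiv_naturality_left_symm g _).symm

lemma map_comp_terminalD_π {X : K} (g : X ⟶ ∏ᶜ fun n : ℕ => iterObj R O (n + 1)) (n : ℕ) :
    F.map g ≫ terminalD adj O ≫ Pi.π _ n = (adj.homEquiv X _).symm (g ≫ Pi.π _ (n + 1)) := by
  rw [terminalD, Pi.lift_π]
  exact (adj.homEquiv_naturality_left_symm g _).symm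

lemma π_eq_skipTranspose {M : FMealy F O} (g : M.E ⟶ ∏ᶜ fun n : ℕ => iterObj R O (n + 1))
    (hd : M.d ≫ g = F.map g ≫ terminalD adj O) (hs : M.s = F.map g ≫ terminalS adj O) (n : ℕ) :
    g ≫ Pi.π _ n = skipTranspose adj M n := by
  induction n with
  | zero => rw [skipTranspose, hs, map_comp_terminalS, Equiv.apply_symm_apply]; rfl
  | succ n ih =>
    rw [skipTranspose, ← ih, reassoc_of% hd, map_comp_terminalD_π, Equiv.apply_symm_apply]; rfl

noncomputable def toTerminalMachine (M : FMealy F O) : M ⟶ terminalMachine adj O where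
  f := Pi.lift (skipTranspose adj M)
  hd := show M.d ≫ Pi.lift (skipTranspose adj M) = F.map (Pi.lift _) ≫ terminalD adj O from
    Pi.hom_ext _ _ fun n => by
    rw [Category.assoc, Category.assoc, Pi.lift_π, map_comp_terminalD_π]
    erw [Pi.lift_π]
    rw [skipTranspose, Equiv.symm_apply_apply]
  hs := show M.s = F.map (Pi.lift (skipTranspose adj M)) ≫ terminalS adj O by
    rw [map_comp_terminalS]
    erw [Pi.lift_π]
    rw [skipTranspose, Equiv.symm_apply_apply]

noncomputable def isTerminalTerminalMachine : IsTerminal (terminalMachine adj O) :=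
  IsTerminal.ofUniqueHom (toTerminalMachine adj) fun _ u => hom_ext <| Pi.hom_ext _ _ fun n =>
    (π_eq_skipTranspose adj u.f u.hd u.hs n).trans (Pi.lift_π _ _).symm

end Terminal

section Pullback

variable [HasPullbacks K] {O : K} {M N T : FMealy F O} (f : M ⟶ T) (g : N ⟶ T)

lemma map_fst_comp_d_comp :
    (F.map (pullback.fst f.f g.f) ≫ M.d) ≫ f.f = (F.map (pullback.snd f.f g.f) ≫ N.d) ≫ g.f := by
  simp only [Category.assoc, f.hd, g.hd, ← F.map_comp_assoc, pullback.condition]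

lemma map_fst_comp_s :
    F.map (pullback.fst f.f g.f) ≫ M.s = F.map (pullback.snd f.f g.f) ≫ N.s := by
  rw [f.hs, g.hs, ← F.map_comp_assoc, ← F.map_comp_assoc, pullback.condition]

noncomputable def pullbackObj : FMealy F O where
  E := pullback f.f g.f
  d := pullback.lift _ _ (map_fst_comp_d_comp f g)
  s := F.map (pullback.fst f.f g.f) ≫ M.s

noncomputable def pullbackFst : pullbackObj f g ⟶ M where
  f := pullback.fst f.f g.f
  hd := pullback.lift_fst _ _ _
  hs := rfl

noncomputable def pullbackSnd : pullbackObj f g ⟶ N where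
  f := pullback.snd f.f g.f
  hd := pullback.lift_snd _ _ _
  hs := map_fst_comp_s f g

noncomputable def pullbackCone : PullbackCone f g :=
  PullbackCone.mk (pullbackFst f g) (pullbackSnd f g) (hom_ext pullback.condition)

variable {f g} in
noncomputable def pullbackLift (c : PullbackCone f g) : c.pt ⟶ pullbackObj f g where
  f := pullback.lift c.fst.f c.snd.f (congrArg Hom.f c.condition)
  hd := pullback.hom_ext
    (by
      erw [Category.assoc, Category.assoc, pullback.lift_fst, pullback.lift_fst, c.fst.hd,
        ← F.map_comp_assoc, pullback.lift_fst])
    (by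
      erw [Category.assoc, Category.assoc, pullback.lift_snd, pullback.lift_snd, c.snd.hd,
        ← F.map_comp_assoc, pullback.lift_snd])
  hs := by erw [← F.map_comp_assoc, pullback.lift_fst, c.fst.hs]

noncomputable def isLimitPullbackCone : IsLimit (pullbackCone f g) :=
  PullbackCone.IsLimit.mk _ pullbackLift
    (fun _ => hom_ext (pullback.lift_fst _ _ _))
    (fun _ => hom_ext (pullback.lift_snd _ _ _))
    (fun _ _ hfst hsnd => hom_ext <| pullback.hom_ext
      ((congrArg Hom.f hfst).trans (pullback.lift_fst _ _ _).symm)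
      ((congrArg Hom.f hsnd).trans (pullback.lift_snd _ _ _).symm))

instance : HasLimit (cospan f g) := ⟨⟨⟨_, isLimitPullbackCone f g⟩⟩⟩

instance : HasPullbacks (FMealy F O) := hasPullbacks_of_hasLimit_cospan _

noncomputable def isLimitBinaryFanOfIsTerminal (hT : IsTerminal T) (M N : FMealy F O) :
    IsLimit (BinaryFan.mk (pullbackFst (hT.from M) (hT.from N))
      (pullbackSnd (hT.from M) (hT.from N))) :=
  isBinaryProductOfIsTerminalIsPullback _ _ hT _ _ (isLimitPullbackCone _ _)

end Pullback

end FMealy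

/-- If `K` has countable products and pullbacks and `F ⊣ R`, then the category of
`F`-Mealy machines with output `O` has binary products; moreover the product of two
machines `M`, `N` has as carrier the pullback in `K` of the underlying maps of the
unique machine morphisms from `M` and `N` into the terminal machine, whose carrier is
`O_∞ = ∏_{n ≥ 1} Rⁿ O`. -/
theorem fMealy_binary_products_via_pullback
    {K : Type u} [Category.{v} K] [HasCountableProducts K] [HasPullbacks K]
    (F : K ⥤ K) (R : K ⥤ K) (adj : F ⊣ R) (O : K) :
    HasBinaryProducts (FMealy F O) ∧
    ∃ (dInfty : F.obj (∏ᶜ fun n : ℕ => iterObj R O (n + 1)) ⟶ ∏ᶜ fun n : ℕ => iterObj R O (n + 1))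
      (sInfty : F.obj (∏ᶜ fun n : ℕ => iterObj R O (n + 1)) ⟶ O)
      (hT : IsTerminal (FMealy.mk (∏ᶜ fun n : ℕ => iterObj R O (n + 1)) dInfty sInfty)),
      ∀ M N : FMealy F O,
        ∃ (P : FMealy F O) (p₁ : P ⟶ M) (p₂ : P ⟶ N),
          Nonempty (IsLimit (BinaryFan.mk p₁ p₂)) ∧
          Nonempty (P.E ≅ pullback (FMealy.Hom.f (hT.from M)) (FMealy.Hom.f (hT.from N))) := by
  have hT : IsTerminal (FMealy.terminalMachine adj O) := FMealy.isTerminalTerminalMachine adj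
  have : HasTerminal (FMealy F O) := hT.hasTerminal
  exact ⟨hasBinaryProducts_of_hasTerminal_and_pullbacks _, FMealy.terminalD adj O,
    FMealy.terminalS adj O, hT,
    fun M N => ⟨_, _, _, ⟨FMealy.isLimitBinaryFanOfIsTerminal hT M N⟩, ⟨Iso.refl _⟩⟩⟩
end

section
/- Let K be a category with countable products, F : K ⥤ K an endofunctor with a right adjoint R, and O an object of K; let (O_∞, d_∞, s_∞) be the terminal F-Moore machine with output O (carrier O_∞ = ∏_{n ≥ 0} Rⁿ(O)). Assume moreover that F is an input process, i.e. the forgetful functor U : Alg(F) ⥤ K has a left adjoint G. Then there is a chain of two composable adjunctions G̃ ⊣ Ũ between K/O_∞ and Alg(F)/(O_∞, d_∞) (the local adjunction on slices induced by G ⊣ U) and L ⊣ B between Alg(F)/(O_∞, d_∞) and F-Mre (where B sends a machine to the unique algebra morphism into (O_∞,d_∞)); in particular the composite functors give an adjunction L ∘ G̃ ⊣ Ũ ∘ B between K/O_∞ and F-Mre. -/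
open CategoryTheory Limits

universe w w' v u

namespace FMoore

variable {K : Type u} [Category.{v} K] {F : K ⥤ K} {O : K}

/-- The underlying `F`-algebra of an `F`-Moore machine. -/
def toAlgebra (F : K ⥤ K) (O : K) : FMoore F O ⥤ Endofunctor.Algebra F where
  obj M := ⟨M.E, M.d⟩
  map {M N} u := ⟨u.f, u.hd.symm⟩

/-- The behaviour functor `B` into the slice of `F`-algebras over the algebra underlying
a terminal machine `T`, sending a machine `M` to the unique algebra morphism underlying
the unique machine morphism `M ⟶ T`. -/
def behaviour {F : K ⥤ K} {O : K} (T : FMoore F O) (hT : IsTerminal T) :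
    FMoore F O ⥤ Over ((toAlgebra F O).obj T) where
  obj M := Over.mk ((toAlgebra F O).map (hT.from M))
  map {M N} u := Over.homMk ((toAlgebra F O).map u) (by
    show (toAlgebra F O).map u ≫ (toAlgebra F O).map (hT.from N) = (toAlgebra F O).map (hT.from M)
    rw [← Functor.map_comp]
    congr 1
    exact hT.hom_ext _ _)
  map_id M := by
    ext
    exact congrArg Endofunctor.Algebra.Hom.f ((toAlgebra F O).map_id M)
  map_comp u v := by
    ext
    exact congrArg Endofunctor.Algebra.Hom.f ((toAlgebra F O).map_comp u v)

end FMoore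

/-- Given an adjunction `G ⊣ U` and an object `A`, the functor `K/U(A) ⥤ H/A` sending
an object `g : Y ⟶ U(A)` of the slice to its adjunct transpose `G(Y) ⟶ A`. -/
def sliceTranspose {K : Type u} [Category.{v} K] {H : Type u'} [Category.{v'} H]
    (G : K ⥤ H) (U : H ⥤ K) (adj : G ⊣ U) (A : H) :
    Over (U.obj A) ⥤ Over A where
  obj g := Over.mk ((adj.homEquiv g.left A).symm g.hom)
  map {g g'} h := Over.homMk (G.map h.left) (by
    show G.map h.left ≫ (adj.homEquiv g'.left A).symm g'.hom = (adj.homEquiv g.left A).symm g.hom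
    rw [Adjunction.homEquiv_counit, Adjunction.homEquiv_counit, ← Category.assoc,
      ← G.map_comp, Over.w h])

/-!
The local adjunction `G̃ ⊣ Ũ` is the adjunction `Over.post G ⋙ Over.map (ε_A) ⊣ Over.post U`
induced on slices by `G ⊣ U`, since post-composing `G g` with the counit is the adjunct transpose
of `g`. The behaviour functor `B` is even an equivalence, because a machine `(E, d, s)` is
determined by its behaviour `β : (E, d) ⟶ (O_∞, d_∞)` through `s = β ≫ s_∞`, and by terminality
every algebra morphism `β` into `(O_∞, d_∞)` is the behaviour of the machine with output
`β ≫ s_∞`. Thus `L` can be taken to be an inverse of `B`, and the last adjunction is the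
composite of the two.
-/

def sliceTransposeAdjunction {K : Type*} [Category* K] {H : Type*} [Category* H]
    (G : K ⥤ H) (U : H ⥤ K) (adj : G ⊣ U) (A : H) :
    sliceTranspose G U adj A ⊣ Over.post U :=
  (Over.postAdjunctionRight adj).ofNatIsoLeft (Iso.refl _)

namespace FMoore

variable {K : Type*} [Category* K] {F : K ⥤ K} {O : K}

def ofOver (A : Endofunctor.Algebra F) (s : A.a ⟶ O) (X : Over A) : FMoore F O :=
  ⟨X.left.a, X.left.str, X.hom.f ≫ s⟩

variable (T : FMoore F O) (hT : IsTerminal T)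

lemma isTerminal_from_ofOver (X : Over ((toAlgebra F O).obj T)) :
    hT.from (ofOver _ T.s X) = ⟨X.hom.f, X.hom.h.symm, rfl⟩ :=
  hT.hom_ext _ _

def behaviourObjOfOverIso (X : Over ((toAlgebra F O).obj T)) :
    (behaviour T hT).obj (ofOver _ T.s X) ≅ X :=
  Over.isoMk (Endofunctor.Algebra.isoMk (Iso.refl X.left.a)
    (by simp : F.map (𝟙 X.left.a) ≫ X.left.str = X.left.str ≫ 𝟙 _)) (by
      ext
      exact (Category.id_comp _).trans (congrArg Hom.f (isTerminal_from_ofOver T hT X)).symm)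

instance : (behaviour T hT).Faithful where
  map_injective h := Hom.ext (congrArg (fun k => k.left.f) h)

instance : (behaviour T hT).Full where
  map_surjective {M N} h := by
    have hf : h.left.f ≫ (hT.from N).f = (hT.from M).f :=
      congrArg Endofunctor.Algebra.Hom.f (Over.w h)
    refine ⟨⟨h.left.f, h.left.h.symm, ?_⟩, rfl⟩
    rw [(hT.from M).hs, (hT.from N).hs, ← hf]
    exact Category.assoc _ _ _

instance : (behaviour T hT).EssSurj where
  mem_essImage X := ⟨ofOver _ T.s X, ⟨behaviourObjOfOverIso T hT X⟩⟩

instance : (behaviour T hT).IsEquivalence where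

end FMoore

theorem fMoore_behaviour_adjunction_chain_general
    {K : Type u} [Category.{v} K] [HasCountableProducts K]
    (F : K ⥤ K) (R : K ⥤ K) (O : K)
    (G : K ⥤ Endofunctor.Algebra F) (adjGU : G ⊣ Endofunctor.Algebra.forget F)
    (dInfty : F.obj (∏ᶜ fun n : ℕ => iterObj R O n) ⟶ ∏ᶜ fun n : ℕ => iterObj R O n)
    (sInfty : (∏ᶜ fun n : ℕ => iterObj R O n) ⟶ O)
    (hT : IsTerminal (FMoore.mk (∏ᶜ fun n : ℕ => iterObj R O n) dInfty sInfty)) :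
    ∃ (_ : sliceTranspose G (Endofunctor.Algebra.forget F) adjGU
            ((FMoore.toAlgebra F O).obj (FMoore.mk (∏ᶜ fun n : ℕ => iterObj R O n) dInfty sInfty)) ⊣
          Over.post (Endofunctor.Algebra.forget F))
      (L : Over ((FMoore.toAlgebra F O).obj
            (FMoore.mk (∏ᶜ fun n : ℕ => iterObj R O n) dInfty sInfty)) ⥤ FMoore F O)
      (_ : L ⊣ FMoore.behaviour _ hT),
      Nonempty ((sliceTranspose G (Endofunctor.Algebra.forget F) adjGU
            ((FMoore.toAlgebra F O).obj (FMoore.mk (∏ᶜ fun n : ℕ => iterObj R O n) dInfty sInfty)) ⋙ L) ⊣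
          (FMoore.behaviour _ hT ⋙ Over.post (Endofunctor.Algebra.forget F))) := by
  let sliceAdj := sliceTransposeAdjunction G (Endofunctor.Algebra.forget F) adjGU
    ((FMoore.toAlgebra F O).obj (FMoore.mk _ dInfty sInfty))
  let behaviourAdj := (FMoore.behaviour _ hT).asEquivalence.symm.toAdjunction
  exact ⟨sliceAdj, _, behaviourAdj, ⟨sliceAdj.comp behaviourAdj⟩⟩

/-- If `F` is an input process (the forgetful functor `U : Alg(F) ⥤ K` has a left
adjoint `G`) and `(O_∞, d_∞, s_∞)` is the terminal `F`-Moore machine (with carrier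
`O_∞ = ∏_{n ≥ 0} Rⁿ O`), then there is a chain of two adjunctions
`G̃ ⊣ Ũ` between `K/O_∞` and `Alg(F)/(O_∞, d_∞)` and `L ⊣ B` between
`Alg(F)/(O_∞, d_∞)` and `F-Mre`; in particular the composites form an adjunction
`L ∘ G̃ ⊣ Ũ ∘ B` between `K/O_∞` and `F-Mre`. -/
theorem fMoore_behaviour_adjunction_chain
    {K : Type u} [Category.{v} K] [HasCountableProducts K]
    (F : K ⥤ K) (R : K ⥤ K) (adj : F ⊣ R) (O : K)
    (G : K ⥤ Endofunctor.Algebra F) (adjGU : G ⊣ Endofunctor.Algebra.forget F)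
    (dInfty : F.obj (∏ᶜ fun n : ℕ => iterObj R O n) ⟶ ∏ᶜ fun n : ℕ => iterObj R O n)
    (sInfty : (∏ᶜ fun n : ℕ => iterObj R O n) ⟶ O)
    (hT : IsTerminal (FMoore.mk (∏ᶜ fun n : ℕ => iterObj R O n) dInfty sInfty)) :
    ∃ (_ : sliceTranspose G (Endofunctor.Algebra.forget F) adjGU
            ((FMoore.toAlgebra F O).obj (FMoore.mk (∏ᶜ fun n : ℕ => iterObj R O n) dInfty sInfty)) ⊣
          Over.post (Endofunctor.Algebra.forget F))
      (L : Over ((FMoore.toAlgebra F O).obj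
            (FMoore.mk (∏ᶜ fun n : ℕ => iterObj R O n) dInfty sInfty)) ⥤ FMoore F O)
      (_ : L ⊣ FMoore.behaviour _ hT),
      Nonempty ((sliceTranspose G (Endofunctor.Algebra.forget F) adjGU
            ((FMoore.toAlgebra F O).obj (FMoore.mk (∏ᶜ fun n : ℕ => iterObj R O n) dInfty sInfty)) ⋙ L) ⊣
          (FMoore.behaviour _ hT ⋙ Over.post (Endofunctor.Algebra.forget F))) :=
  fMoore_behaviour_adjunction_chain_general F R O G adjGU dInfty sInfty hT
end
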